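/- Let E = ⊕_{n≥0} E^n be a graded ring, Z a graded-commutative Noetherian subring generated over E^0 by central elements of degree 2, and N = ⊕_{n≥0} N^n a Noetherian graded Z-module with each N^n a finite-dimensional vector space over a field k. Then there exists a homogeneous element η ∈ Z of positive degree such that multiplication by η : N^n → N^{n+|η|} is injective for all n ≫ 0. -/

import Mathlib

/-!
Let `I` be the ideal generated by `𝒜 2`. As `Z` is generated in degrees `0` and `2`, every element
of degree `m` lies in `I ^ ⌈m / 2⌉`. The `I`-power torsion `T` of `N` is killed by a single power
`I ^ K`, and since it is finitely generated it vanishes in high degrees. No associated prime of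
`N ⧸ T` contains `I`, so graded prime avoidance gives a homogeneous `η` of positive degree outside
all of them; then `η • x = 0` forces `x ∈ T`.
-/

open DirectSum SetLike Submodule

section GradedModule

variable {ι R M σ τ : Type*} [DecidableEq ι] [AddRightCancelMonoid ι]
  [Semiring R] [SetLike σ R] [AddSubmonoidClass σ R] (𝒜 : ι → σ) [GradedRing 𝒜]
  [AddCommMonoid M] [Module R M] [SetLike τ M] [AddSubmonoidClass τ M] (ℳ : ι → τ)
  [Decomposition ℳ] [GradedSMul 𝒜 ℳ]

theorem coe_decompose_smul_add_of_right_mem (r : R) {i j : ι} {x : M} (hx : x ∈ ℳ j) :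
    (decompose ℳ (r • x) (i + j) : M) = (decompose 𝒜 r i : R) • x := by
  induction r using Decomposition.inductionOn 𝒜 with
  | zero => simp
  | @homogeneous k r =>
    have hrx : (r : R) • x ∈ ℳ (k + j) := GradedSMul.smul_mem r.2 hx
    obtain rfl | hki := eq_or_ne k i
    · rw [decompose_coe, of_eq_same, decompose_of_mem_same ℳ hrx]
    · rw [decompose_coe, of_eq_of_ne _ _ _ hki.symm, decompose_of_mem_ne ℳ hrx
        (fun h => hki (add_right_cancel h)), ZeroMemClass.coe_zero, zero_smul]
  | add r r' hr hr' =>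
    simp only [add_smul, decompose_add, DirectSum.add_apply, AddMemClass.coe_add, hr, hr']

end GradedModule

section Torsion

variable {R M : Type*} [CommRing R] [AddCommGroup M] [Module R M]

theorem exists_torsionBySet_pow_saturated [IsNoetherian R M] (I : Ideal R) :
    ∃ K : ℕ, ∀ x : M, (∀ a ∈ I, a • x ∈ torsionBySet R M ↑(I ^ K)) →
      x ∈ torsionBySet R M ↑(I ^ K) := by
  obtain ⟨K, hK⟩ := monotone_stabilizes_iff_noetherian.mpr ‹IsNoetherian R M›
    ⟨fun k => torsionBySet R M ↑(I ^ k),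
      fun _ _ hkl => torsionBySet_le_torsionBySet_of_subset (Ideal.pow_le_pow_right hkl)⟩
  refine ⟨K, fun x hx => ?_⟩
  have hle : I ^ (K + 1) ≤ (⊥ : Submodule R M).colon {x} := by
    rw [pow_succ, Ideal.mul_le]
    intro b hb a ha
    rw [mem_colon_singleton, mem_bot, mul_smul]
    exact (mem_torsionBySet_iff _ _).mp (hx a ha) ⟨b, hb⟩
  rw [show torsionBySet R M ↑(I ^ K) = torsionBySet R M ↑(I ^ (K + 1)) from hK _ K.le_succ,
    mem_torsionBySet_iff]
  exact fun ⟨b, hb⟩ => by simpa [mem_colon_singleton] using hle hb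

theorem not_le_of_mem_associatedPrimes_quotient [IsNoetherianRing R] {T : Submodule R M}
    {I : Ideal R} (hT : ∀ x : M, (∀ a ∈ I, a • x ∈ T) → x ∈ T) {p : Ideal R}
    (hp : p ∈ associatedPrimes R (M ⧸ T)) : ¬ I ≤ p := by
  obtain ⟨hprime, x, rfl⟩ := isAssociatedPrime_iff.mp hp
  intro hI
  induction x using Submodule.Quotient.induction_on with | H x => ?_
  have hxT : x ∈ T := hT x fun a ha => by
    simpa [mem_colon_singleton, ← Submodule.Quotient.mk_smul] using hI ha
  exact hprime.ne_top (by simp [(Submodule.Quotient.mk_eq_zero T).mpr hxT])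

theorem mem_of_smul_mem_of_forall_notMem_associatedPrimes [IsNoetherianRing R]
    {T : Submodule R M} {η : R} (hη : ∀ p ∈ associatedPrimes R (M ⧸ T), η ∉ p) {x : M}
    (hx : η • x ∈ T) : x ∈ T := by
  have hreg : IsSMulRegular (M ⧸ T) η := by
    by_contra h
    have : η ∈ ⋃ p ∈ associatedPrimes R (M ⧸ T), (p : Set R) := by
      rw [biUnion_associatedPrimes_eq_compl_regular]; exact h
    obtain ⟨p, hp, hηp⟩ := Set.mem_iUnion₂.mp this
    exact hη p hp hηp
  rw [← Submodule.Quotient.mk_eq_zero] at hx ⊢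
  exact hreg.right_eq_zero_of_smul hx

end Torsion

section PrimeAvoidance

variable {R σ : Type*} [CommRing R] [SetLike σ R] [AddSubgroupClass σ R] {𝒜 : ℕ → σ}
  [GradedRing 𝒜]

theorem Ideal.IsHomogeneous.exists_homogeneous_mem_notMem {I J : Ideal R}
    (hI : I.IsHomogeneous 𝒜) (h : ¬ I ≤ J) : ∃ e, ∃ c ∈ 𝒜 e, c ∈ I ∧ c ∉ J := by
  classical
  by_contra! hcon
  exact h fun z hz => by
    rw [← sum_support_decompose 𝒜 z]
    exact J.sum_mem fun i _ => hcon i _ (coe_mem _) (hI i hz)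

theorem exists_homogeneous_forall_mem_notMem {p : Ideal R} (hp : p.IsPrime)
    (Q : Finset (Ideal R)) (hQ : ∀ q ∈ Q, q.IsHomogeneous 𝒜 ∧ ¬ q ≤ p) :
    ∃ e, ∃ c ∈ 𝒜 e, (∀ q ∈ Q, c ∈ q) ∧ c ∉ p := by
  classical
  induction Q using Finset.induction_on with
  | empty => exact ⟨0, 1, GradedOne.one_mem, by simp, (Ideal.ne_top_iff_one p).mp hp.ne_top⟩
  | insert q Q _ ih =>
    obtain ⟨e, c, hc, hcQ, hcp⟩ := ih fun q' hq' => hQ q' (Finset.mem_insert_of_mem hq')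
    obtain ⟨hq, hqp⟩ := hQ q (Finset.mem_insert_self q Q)
    obtain ⟨e', c', hc', hc'q, hc'p⟩ := hq.exists_homogeneous_mem_notMem hqp
    refine ⟨e' + e, c' * c, mul_mem_graded hc' hc, ?_, ?_⟩
    · rintro q' hq'
      rcases Finset.mem_insert.mp hq' with rfl | hq'
      exacts [q'.mul_mem_right c hc'q, q'.mul_mem_left c' (hcQ q' hq')]
    · exact fun h => (hp.mem_or_mem h).elim hc'p hcp

theorem exists_homogeneous_pos_forall_notMem_of_isHomogeneous (P : Finset (Ideal R))
    (hP : ∀ p ∈ P, p.IsPrime ∧ p.IsHomogeneous 𝒜 ∧ ∃ d, 0 < d ∧ ∃ a ∈ 𝒜 d, a ∉ p) :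
    ∃ d, 0 < d ∧ ∃ η ∈ 𝒜 d, ∀ p ∈ P, η ∉ p := by
  classical
  induction P using Finset.strongInduction with | H P ih => ?_
  obtain rfl | hne := P.eq_empty_or_nonempty
  · exact ⟨1, one_pos, 0, zero_mem _, by simp⟩
  -- a minimal `p` is contained in no other member of `P`, so they all have elements outside `p`
  obtain ⟨p, hpP, hpmin⟩ := P.exists_minimal hne
  obtain ⟨hp, -, d₀, hd₀, a, ha, hap⟩ := hP p hpP
  obtain ⟨d, hd, η, hη, hηQ⟩ := ih (P.erase p) (P.erase_ssubset hpP)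
    fun q hq => hP q (Finset.mem_of_mem_erase hq)
  by_cases hηp : η ∈ p
  swap
  · refine ⟨d, hd, η, hη, fun q hq => ?_⟩
    obtain rfl | hqp := eq_or_ne q p
    exacts [hηp, hηQ q (Finset.mem_erase.mpr ⟨hqp, hq⟩)]
  obtain ⟨e, c, hc, hcQ, hcp⟩ := exists_homogeneous_forall_mem_notMem hp (P.erase p)
    fun q hq => ⟨(hP q (Finset.mem_of_mem_erase hq)).2.1, fun hqp =>
      Finset.ne_of_mem_erase hq (le_antisymm hqp (hpmin (Finset.mem_of_mem_erase hq) hqp))⟩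
  -- `η` and `b` are both homogeneous, and `η ^ deg b`, `b ^ deg η` have the same degree
  set b := a * c
  have hb : b ∈ 𝒜 (d₀ + e) := mul_mem_graded ha hc
  have hbp : b ∉ p := fun h => (hp.mem_or_mem h).elim hap hcp
  refine ⟨(d₀ + e) * d, Nat.mul_pos (by omega) hd, η ^ (d₀ + e) + b ^ d,
    add_mem (by simpa using pow_mem_graded (d₀ + e) hη)
      (by simpa [mul_comm] using pow_mem_graded d hb), fun q hq => ?_⟩
  obtain rfl | hqp := eq_or_ne q p
  · rw [Ideal.add_mem_iff_right _ (Ideal.pow_mem_of_mem _ hηp _ (by omega))]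
    exact fun h => hbp (hp.mem_of_pow_mem _ h)
  · have hqQ : q ∈ P.erase p := Finset.mem_erase.mpr ⟨hqp, hq⟩
    rw [Ideal.add_mem_iff_left _ (Ideal.pow_mem_of_mem _ (hcQ q hqQ |> q.mul_mem_left a) _ hd)]
    exact fun h => hηQ q hqQ ((hP q hq).1.mem_of_pow_mem _ h)

theorem exists_homogeneous_pos_forall_notMem (P : Finset (Ideal R))
    (hP : ∀ p ∈ P, p.IsPrime ∧ ∃ d, 0 < d ∧ ∃ a ∈ 𝒜 d, a ∉ p) :
    ∃ d, 0 < d ∧ ∃ η ∈ 𝒜 d, ∀ p ∈ P, η ∉ p := by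
  classical
  obtain ⟨d, hd, η, hη, hηP⟩ := exists_homogeneous_pos_forall_notMem_of_isHomogeneous
    (P.image fun p => (p.homogeneousCore 𝒜).toIdeal) <| by
      simp only [Finset.mem_image, forall_exists_index, and_imp, forall_apply_eq_imp_iff₂]
      intro p hpP
      obtain ⟨hp, d, hd, a, ha, hap⟩ := hP p hpP
      exact ⟨hp.homogeneousCore, (p.homogeneousCore 𝒜).isHomogeneous,
        d, hd, a, ha, fun h => hap (p.toIdeal_homogeneousCore_le 𝒜 h)⟩
  exact ⟨d, hd, η, hη, fun p hpP h => hηP _ (Finset.mem_image_of_mem _ hpP)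
    (Ideal.mem_homogeneousCore_of_homogeneous_of_mem ⟨d, hη⟩ h)⟩

end PrimeAvoidance

section NatGrading

variable {R M σ τ : Type*} [CommRing R] [SetLike σ R] [AddSubgroupClass σ R] {𝒜 : ℕ → σ}
  [GradedRing 𝒜]

theorem coe_decompose_mem_span_pow (hgen : Subring.closure ((𝒜 0 : Set R) ∪ 𝒜 2) = ⊤)
    (r : R) (m : ℕ) : (decompose 𝒜 r m : R) ∈ Ideal.span (𝒜 2 : Set R) ^ ((m + 1) / 2) := by
  classical
  have hr : r ∈ Subring.closure ((𝒜 0 : Set R) ∪ 𝒜 2) := hgen ▸ Subring.mem_top r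
  induction hr using Subring.closure_induction generalizing m with
  | mem x hx =>
    obtain ⟨i, hi, hxi⟩ : ∃ i, (i = 0 ∨ i = 2) ∧ x ∈ 𝒜 i := by
      rcases hx with hx | hx
      exacts [⟨0, .inl rfl, hx⟩, ⟨2, .inr rfl, hx⟩]
    rw [decompose_of_mem 𝒜 hxi, coe_of_apply]
    split_ifs with him
    · obtain rfl := him
      rcases hi with rfl | rfl
      · simp
      · simpa using Ideal.subset_span hxi
    · exact zero_mem _
  | zero => simp
  | one =>
    rw [decompose_of_mem 𝒜 GradedOne.one_mem, coe_of_apply]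
    split_ifs with hm
    · simp [← hm]
    · exact zero_mem _
  | add x y _ _ hx hy =>
    simpa only [decompose_add, DirectSum.add_apply, AddMemClass.coe_add] using
      add_mem (hx m) (hy m)
  | neg x _ hx =>
    rw [decompose_neg]
    exact neg_mem (hx m)
  | mul x y _ _ hx hy =>
    rw [decompose_mul, coe_mul_apply]
    refine sum_mem fun ij hij => ?_
    have hsum : ij.1 + ij.2 = m := (Finset.mem_filter.mp hij).2
    have hmul := Ideal.mul_mem_mul (hx ij.1) (hy ij.2)
    rw [← pow_add] at hmul
    exact Ideal.pow_le_pow_right (by omega) hmul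

theorem mem_span_pow_of_mem (hgen : Subring.closure ((𝒜 0 : Set R) ∪ 𝒜 2) = ⊤) {r : R} {m : ℕ}
    (hr : r ∈ 𝒜 m) : r ∈ Ideal.span (𝒜 2 : Set R) ^ ((m + 1) / 2) :=
  decompose_of_mem_same 𝒜 hr ▸ coe_decompose_mem_span_pow hgen r m

variable [AddCommGroup M] [Module R M] [SetLike τ M] [AddSubmonoidClass τ M] {ℳ : ℕ → τ}
  [Decomposition ℳ] [GradedSMul 𝒜 ℳ]

theorem exists_forall_ge_eq_zero_of_mem [IsNoetherian R M] (T : Submodule R M) (D : ℕ)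
    (hT : ∀ m ≥ D, ∀ r ∈ 𝒜 m, ∀ t ∈ T, r • t = 0) :
    ∃ n₁, ∀ n ≥ n₁, ∀ x ∈ ℳ n, x ∈ T → x = 0 := by
  classical
  obtain ⟨j₀, hj₀⟩ := monotone_stabilizes_iff_noetherian.mpr ‹IsNoetherian R M›
    ⟨fun j => Submodule.span R {y | ∃ i ≤ j, y ∈ ℳ i ∧ y ∈ T},
      fun j j' hj => Submodule.span_mono fun y ⟨i, hi, hy⟩ => ⟨i, hi.trans hj, hy⟩⟩
  refine ⟨j₀ + D, fun n hn x hx hxT => ?_⟩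
  -- the homogeneous elements of `T` are generated by those of degree at most `j₀`
  have hxspan : x ∈ Submodule.span R {y | ∃ i ≤ j₀, y ∈ ℳ i ∧ y ∈ T} := by
    rw [show Submodule.span R {y | ∃ i ≤ j₀, y ∈ ℳ i ∧ y ∈ T} =
      Submodule.span R {y | ∃ i ≤ n, y ∈ ℳ i ∧ y ∈ T} from hj₀ n (by omega)]
    exact Submodule.subset_span ⟨n, le_rfl, hx, hxT⟩
  obtain ⟨k, f, g, rfl⟩ := Submodule.mem_span_set'.mp hxspan
  rw [← decompose_of_mem_same ℳ hx, decompose_sum, DFinsupp.finsetSum_apply,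
    AddSubmonoidClass.coe_finsetSum]
  refine Finset.sum_eq_zero fun l _ => ?_
  obtain ⟨i, hi, hgi, hgT⟩ := (g l).2
  rw [show n = (n - i) + i by omega, coe_decompose_smul_add_of_right_mem 𝒜 ℳ _ hgi]
  exact hT _ (by omega) _ (coe_mem _) _ hgT

end NatGrading

theorem stmt_12 (Z : Type) [CommRing Z] [IsNoetherianRing Z]
    (𝒜 : ℕ → AddSubgroup Z) [GradedRing 𝒜]
    (hgen : Subring.closure ((𝒜 0 : Set Z) ∪ (𝒜 2 : Set Z)) = ⊤)
    (N : Type) [AddCommGroup N] [Module Z N] [IsNoetherian Z N]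
    (ℳ : ℕ → AddSubgroup N) [DirectSum.Decomposition ℳ] [SetLike.GradedSMul 𝒜 ℳ] :
    ∃ (d : ℕ) (η : Z), 0 < d ∧ η ∈ 𝒜 d ∧
      ∃ n₁ : ℕ, ∀ n : ℕ, n₁ ≤ n → ∀ x ∈ ℳ n, η • x = 0 → x = 0 := by
  set I := Ideal.span (𝒜 2 : Set Z)
  obtain ⟨K, hsat⟩ := exists_torsionBySet_pow_saturated (M := N) I
  set T := torsionBySet Z N ↑(I ^ K)
  have hfin := associatedPrimes.finite Z (N ⧸ T)
  obtain ⟨d, hd, η, hη, hηT⟩ := exists_homogeneous_pos_forall_notMem (𝒜 := 𝒜) hfin.toFinset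
    fun p hp => by
      rw [Set.Finite.mem_toFinset] at hp
      have hIp := not_le_of_mem_associatedPrimes_quotient hsat hp
      obtain ⟨a, ha, hap⟩ := Set.not_subset.mp (mt Ideal.span_le.mpr hIp)
      exact ⟨hp.isPrime, 2, two_pos, a, ha, hap⟩
  obtain ⟨n₁, hn₁⟩ := exists_forall_ge_eq_zero_of_mem (𝒜 := 𝒜) (ℳ := ℳ) T (2 * K)
    fun m hm r hr t ht => (mem_torsionBySet_iff _ _).mp ht
      ⟨r, Ideal.pow_le_pow_right (by omega) (mem_span_pow_of_mem hgen hr)⟩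
  refine ⟨d, η, hd, hη, n₁, fun n hn x hx hηx => hn₁ n hn x hx ?_⟩
  exact mem_of_smul_mem_of_forall_notMem_associatedPrimes
    (fun p hp => hηT p (hfin.mem_toFinset.mpr hp)) (hηx ▸ T.zero_mem)
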